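/- arXiv:2312.03204 — 4 statements merged into one kernel-verified Lean document; each statement's English description precedes it below -/
import Mathlib

section
/- For all (a, k), (b, l) ∈ P_n, the intersection of principal right ideals satisfies (a, k) · P_n ∩ (b, l) · P_n = (lcm(a, b), 0) · P_n. In particular P_n is a right LCM monoid: the intersection of any two principal right ideals is again a (nonempty) principal right ideal. -/
/-! Membership in `x · P_n` constrains only the `ℕ⁺`-coordinate, which must be a multiple of
that of `x`: the `ℤ/nℤ`-coordinate of the cofactor can always be chosen to match. So principal
right ideals intersect as the sets of multiples of `a` and `b` do, in the multiples of `lcm(a, b)`. -/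

/-- The underlying set of the monoid `P_n = ℕ⁺ ⋉ ℤ/nℤ`: pairs `(a, k)` with `a` a
positive natural number and `k ∈ ℤ/nℤ`. -/
structure PM (n : ℕ) where
  a : ℕ+
  k : ZMod n

namespace PM

variable {n : ℕ}

/-- Multiplication `(a, k) · (b, l) = (a b, k·b̄ + l)`, where `b̄` is the image of `b`
in `ℤ/nℤ`. -/
instance : Mul (PM n) :=
  ⟨fun x y => ⟨x.a * y.a, x.k * ((y.a : ℕ) : ZMod n) + y.k⟩⟩

/-- The identity element `(1, 0)`. -/
instance : One (PM n) := ⟨⟨1, 0⟩⟩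

@[simp] lemma mul_def (x y : PM n) :
    x * y = ⟨x.a * y.a, x.k * ((y.a : ℕ) : ZMod n) + y.k⟩ := rfl

@[simp] lemma one_def : (1 : PM n) = ⟨1, 0⟩ := rfl

/-- `P_n = ℕ⁺ ⋉ ℤ/nℤ` is a monoid. -/
instance : Monoid (PM n) where
  mul_assoc x y z := by
    simp only [mul_def, PM.mk.injEq]
    exact ⟨mul_assoc _ _ _, by push_cast; ring⟩
  one_mul x := by
    obtain ⟨a, k⟩ := x
    simp
  mul_one x := by
    obtain ⟨a, k⟩ := x
    simp

/-- The principal right ideal `x · P_n = { x · y : y ∈ P_n }`. -/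
def rIdeal (x : PM n) : Set (PM n) := Set.range (fun y => x * y)

lemma mem_rIdeal_iff {x z : PM n} : z ∈ rIdeal x ↔ x.a ∣ z.a := by
  constructor
  · rintro ⟨y, rfl⟩
    exact ⟨y.a, rfl⟩
  · rintro ⟨c, hc⟩
    refine ⟨⟨c, z.k - x.k * ((c : ℕ) : ZMod n)⟩, ?_⟩
    obtain ⟨d, j⟩ := z
    simp_all

lemma mem_rIdeal_self (x : PM n) : x ∈ rIdeal x := ⟨1, mul_one x⟩

lemma rIdeal_inter_rIdeal (x y : PM n) :
    rIdeal x ∩ rIdeal y = rIdeal ⟨PNat.lcm x.a y.a, 0⟩ := by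
  ext z
  simp only [Set.mem_inter_iff, mem_rIdeal_iff]
  exact ⟨fun ⟨hx, hy⟩ => PNat.lcm_dvd hx hy,
    fun h => ⟨(PNat.dvd_lcm_left _ _).trans h, (PNat.dvd_lcm_right _ _).trans h⟩⟩

end PM

theorem PM.rIdeal_inter_general (n : ℕ) :
    (∀ (a b : ℕ+) (k l : ZMod n),
        PM.rIdeal (⟨a, k⟩ : PM n) ∩ PM.rIdeal (⟨b, l⟩ : PM n) =
          PM.rIdeal (⟨PNat.lcm a b, 0⟩ : PM n)) ∧
      ∀ x y : PM n, ∃ z : PM n,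
        PM.rIdeal x ∩ PM.rIdeal y = PM.rIdeal z ∧ (PM.rIdeal x ∩ PM.rIdeal y).Nonempty := by
  refine ⟨fun a b k l => rIdeal_inter_rIdeal _ _, fun x y => ⟨_, rIdeal_inter_rIdeal x y, ?_⟩⟩
  rw [rIdeal_inter_rIdeal]
  exact ⟨_, mem_rIdeal_self _⟩

/-- **`P_n` is a right LCM monoid.**  For all `(a, k), (b, l) ∈ P_n`,
`(a, k) · P_n ∩ (b, l) · P_n = (lcm(a, b), 0) · P_n`.  In particular the intersection of
any two principal right ideals of `P_n` is again a (nonempty) principal right ideal. -/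
theorem PM.rIdeal_inter (n : ℕ) (hn : 1 ≤ n) :
    (∀ (a b : ℕ+) (k l : ZMod n),
        PM.rIdeal (⟨a, k⟩ : PM n) ∩ PM.rIdeal (⟨b, l⟩ : PM n) =
          PM.rIdeal (⟨PNat.lcm a b, 0⟩ : PM n)) ∧
      ∀ x y : PM n, ∃ z : PM n,
        PM.rIdeal x ∩ PM.rIdeal y = PM.rIdeal z ∧ (PM.rIdeal x ∩ PM.rIdeal y).Nonempty :=
  PM.rIdeal_inter_general n
end

section
/- Let n ≥ 1 and let k, l be integers with 0 ≤ l < k < n. Then for every positive natural number a, the equalizer set { x ∈ P_n : (a, [k]) · x = (a, [l]) · x } equals the principal right ideal ( lcm(k − l, n)/(k − l), [0] ) · P_n. Moreover, if a ≠ b are distinct positive natural numbers then { x ∈ P_n : (a, [k]) · x = (b, [l]) · x } is empty. -/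
/-- **Equalizers in `P_n` are principal right ideals.**  Let `n ≥ 1` and let `k, l` be
integers with `0 ≤ l < k < n`.  Then for every positive natural number `a`, the set
`{ x ∈ P_n : (a, [k]) · x = (a, [l]) · x }` equals the principal right ideal
`(lcm(k − l, n)/(k − l), [0]) · P_n`.  Moreover, if `a ≠ b` then
`{ x ∈ P_n : (a, [k]) · x = (b, [l]) · x }` is empty. -/
theorem PM.equalizer_eq_rIdeal (n : ℕ) (hn : 1 ≤ n) (k l : ℕ) (hlk : l < k) (hkn : k < n) :
    (∀ a : ℕ+,
      { x : PM n |
          (⟨a, ((k : ℕ) : ZMod n)⟩ : PM n) * x = (⟨a, ((l : ℕ) : ZMod n)⟩ : PM n) * x } =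
        PM.rIdeal
          (⟨⟨Nat.lcm (k - l) n / (k - l), by
              have h1 : 0 < k - l := by omega
              have h2 : 0 < Nat.lcm (k - l) n := Nat.lcm_pos h1 (by omega)
              exact Nat.div_pos (Nat.le_of_dvd h2 (Nat.dvd_lcm_left _ _)) h1⟩,
            ((0 : ℕ) : ZMod n)⟩ : PM n)) ∧
      ∀ a b : ℕ+, a ≠ b →
        { x : PM n |
            (⟨a, ((k : ℕ) : ZMod n)⟩ : PM n) * x = (⟨b, ((l : ℕ) : ZMod n)⟩ : PM n) * x } =
          (∅ : Set (PM n)) := by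
  set d := k - l with hd
  have hd0 : 0 < d := by omega
  set g := Nat.gcd d n with hg
  have hg0 : 0 < g := Nat.gcd_pos_of_pos_left _ hd0
  set m := n / g with hm
  have hgd : g ∣ d := Nat.gcd_dvd_left _ _
  have hgn : g ∣ n := Nat.gcd_dvd_right _ _
  have hm0 : 0 < m := Nat.div_pos (Nat.le_of_dvd (by omega) hgn) hg0
  have h1 : d * m = Nat.lcm d n := by
    rw [hm, ← Nat.mul_div_assoc _ hgn]
    rfl
  have hlcm : Nat.lcm d n / d = m := by
    rw [← h1, Nat.mul_div_cancel_left _ hd0]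
  have hkey : ∀ b : ℕ, (n ∣ d * b ↔ m ∣ b) := by
    intro b
    have hcop : Nat.Coprime (d / g) m := Nat.coprime_div_gcd_div_gcd hg0
    constructor
    · intro h
      have hn' : g * m = n := Nat.mul_div_cancel' hgn
      have hd' : g * (d / g) = d := Nat.mul_div_cancel' hgd
      have h2 : g * m ∣ g * ((d / g) * b) := by
        rw [hn', ← mul_assoc, hd']; exact h
      have h3 : m ∣ (d / g) * b := (Nat.mul_dvd_mul_iff_left hg0).mp h2
      exact hcop.symm.dvd_of_dvd_mul_left h3
    · rintro ⟨c, rfl⟩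
      rw [← mul_assoc, h1]
      exact (Nat.dvd_lcm_right d n).mul_right c
  have hcast : ((k : ℕ) : ZMod n) = ((d : ℕ) : ZMod n) + ((l : ℕ) : ZMod n) := by
    rw [hd, Nat.cast_sub hlk.le]; ring
  have hmem : ∀ a : ℕ+, ∀ x : PM n,
      ((⟨a, ((k : ℕ) : ZMod n)⟩ : PM n) * x = (⟨a, ((l : ℕ) : ZMod n)⟩ : PM n) * x) ↔
        m ∣ (x.a : ℕ) := by
    intro a x
    rw [← hkey]
    simp only [mul_def, PM.mk.injEq, true_and]
    rw [← ZMod.natCast_eq_zero_iff, hcast]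
    push_cast
    constructor <;> intro h <;> linear_combination h
  constructor
  · intro a
    ext x
    simp only [Set.mem_setOf_eq, hmem a x, PM.rIdeal, Set.mem_range]
    constructor
    · intro h
      have hcpos : 0 < (x.a : ℕ) / m := Nat.div_pos (Nat.le_of_dvd x.a.2 h) hm0
      refine ⟨⟨⟨(x.a : ℕ) / m, hcpos⟩, x.k⟩, ?_⟩
      obtain ⟨⟨av, hav⟩, kv⟩ := x
      simp only [mul_def, PM.mk.injEq]
      congr 1
      · apply PNat.coe_injective
        simp only [PNat.mul_coe, PNat.mk_coe, ← hd, hlcm]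
        exact Nat.mul_div_cancel' h
      · push_cast
        ring
    · rintro ⟨y, rfl⟩
      simp only [mul_def, PNat.mul_coe, PNat.mk_coe, ← hd, hlcm]
      exact Dvd.intro _ rfl
  · intro a b hab
    ext x
    simp only [Set.mem_setOf_eq, Set.mem_empty_iff_false, iff_false, mul_def, PM.mk.injEq]
    rintro ⟨h1, -⟩
    exact hab (mul_right_cancel h1)
end

section
/- Let P be a left cancellative monoid and let ℐ be the smallest collection of partial bijections of P that contains, for every c ∈ P, the left multiplication map λ_c (with domain all of P, range cP, and λ_c(x) = c·x), and is closed under taking inverses of partial bijections and under composition of partial bijections. Then for every s ∈ ℐ and all p, q ∈ P with p in the domain of s, the product p · q also lies in the domain of s and s(p · q) = s(p) · q. -/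
/-- The left inverse hull of a (left cancellative) monoid `P`: the smallest collection
of partial bijections of `P` which contains, for every `c ∈ P`, the left multiplication
map `λ_c` (with domain all of `P`, range `cP`, and `λ_c x = c * x`), and which is closed
under taking inverses of partial bijections and under composition of partial bijections.
(The composite `e.trans f` of two `PartialEquiv`s has source
`{ x ∈ e.source : e x ∈ f.source }`, and `e.symm` swaps source and target.) -/
inductive LeftInverseHull (P : Type*) [Monoid P] : PartialEquiv P P → Prop
  | base (c : P) (e : PartialEquiv P P) (hsrc : e.source = Set.univ)
      (hfun : ∀ x : P, e x = c * x) : LeftInverseHull P e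
  | symm (e : PartialEquiv P P) : LeftInverseHull P e → LeftInverseHull P e.symm
  | trans (e f : PartialEquiv P P) : LeftInverseHull P e → LeftInverseHull P f →
      LeftInverseHull P (e.trans f)

/-!
Left multiplications commute with right multiplication by associativity, and this property
(with the domain closed under right multiplication) passes to inverses and composites of partial
bijections, so it holds on the whole left inverse hull.
-/

namespace PartialEquiv

variable {P : Type*}

def RightMulEquivariant [Mul P] (e : PartialEquiv P P) : Prop :=
  ∀ p ∈ e.source, ∀ q, p * q ∈ e.source ∧ e (p * q) = e p * q

theorem rightMulEquivariant_of_eq_mul [Semigroup P] (c : P) (e : PartialEquiv P P)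
    (hsrc : e.source = Set.univ) (hfun : ∀ x, e x = c * x) : e.RightMulEquivariant :=
  fun p _ q => ⟨hsrc ▸ Set.mem_univ _, by rw [hfun, hfun, mul_assoc]⟩

namespace RightMulEquivariant

variable [Mul P] {e f : PartialEquiv P P}

theorem symm (he : e.RightMulEquivariant) : e.symm.RightMulEquivariant := by
  intro p hp q
  obtain ⟨hmem, hmul⟩ := he (e.symm p) (e.map_target hp) q
  have hval : e (e.symm p * q) = p * q := by rw [hmul, e.right_inv hp]
  exact ⟨hval ▸ e.map_source hmem, by rw [← hval, e.left_inv hmem]⟩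

theorem trans (he : e.RightMulEquivariant) (hf : f.RightMulEquivariant) :
    (e.trans f).RightMulEquivariant := by
  intro p hp q
  rw [trans_source] at hp ⊢
  obtain ⟨hpe, hpf⟩ := hp
  obtain ⟨hmem_e, hmul_e⟩ := he p hpe q
  obtain ⟨hmem_f, hmul_f⟩ := hf (e p) hpf q
  refine ⟨⟨hmem_e, ?_⟩, ?_⟩
  · rwa [Set.mem_preimage, hmul_e]
  · simp only [coe_trans, Function.comp_apply, hmul_e, hmul_f]

end RightMulEquivariant

end PartialEquiv

theorem LeftInverseHull.rightMulEquivariant {P : Type*} [Monoid P] {s : PartialEquiv P P}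
    (hs : LeftInverseHull P s) : s.RightMulEquivariant := by
  induction hs with
  | base c e hsrc hfun => exact PartialEquiv.rightMulEquivariant_of_eq_mul c e hsrc hfun
  | symm e _ he => exact he.symm
  | trans e f _ _ he hf => exact he.trans hf

theorem leftInverseHull_apply_mul_general (P : Type*) [Monoid P]
    (s : PartialEquiv P P) (hs : LeftInverseHull P s)
    (p q : P) (hp : p ∈ s.source) :
    p * q ∈ s.source ∧ s (p * q) = s p * q :=
  hs.rightMulEquivariant p hp q

/-- **Zigzag maps intertwine right multiplication.**  Let `P` be a left cancellative
monoid and let `ℐ` be its left inverse hull.  Then for every `s ∈ ℐ` and all `p, q ∈ P`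
with `p` in the domain of `s`, the product `p · q` also lies in the domain of `s` and
`s (p · q) = s p · q`. -/
theorem leftInverseHull_apply_mul (P : Type*) [Monoid P]
    (hP : ∀ c x y : P, c * x = c * y → x = y)
    (s : PartialEquiv P P) (hs : LeftInverseHull P s)
    (p q : P) (hp : p ∈ s.source) :
    p * q ∈ s.source ∧ s (p * q) = s p * q :=
  leftInverseHull_apply_mul_general P s hs p q hp
end

section
/- Let P be a left cancellative monoid and let ℐ be the smallest collection of partial bijections of P that contains, for every c ∈ P, the left multiplication map λ_c (with domain all of P, range cP, and λ_c(x) = c·x), and is closed under taking inverses of partial bijections and under composition of partial bijections. If s ∈ ℐ has domain equal to all of P and range equal to all of P, then u := s(1) is an invertible element (unit) of P and s(x) = u · x for every x ∈ P; that is, s is left multiplication by a unit of P. -/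
namespace PartialEquiv

variable {P : Type*}

def CommutesRightMul [Mul P] (e : PartialEquiv P P) : Prop :=
  ∀ x ∈ e.source, ∀ y, x * y ∈ e.source ∧ e (x * y) = e x * y

theorem CommutesRightMul.trans [Mul P] {e f : PartialEquiv P P} (he : e.CommutesRightMul)
    (hf : f.CommutesRightMul) : (e.trans f).CommutesRightMul := by
  intro x hx y
  rw [trans_source] at hx
  obtain ⟨hxy, hexy⟩ := he x hx.1 y
  obtain ⟨hfy, hfxy⟩ := hf (e x) hx.2 y
  refine ⟨⟨hxy, ?_⟩, ?_⟩
  · show e (x * y) ∈ f.source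
    rwa [hexy]
  · show f (e (x * y)) = f (e x) * y
    rw [hexy, hfxy]

theorem commutesRightMul_of_eq_mul [Semigroup P] {e : PartialEquiv P P} {c : P}
    (hsrc : e.source = Set.univ) (hfun : ∀ x, e x = c * x) : e.CommutesRightMul :=
  fun x _ y => ⟨hsrc ▸ Set.mem_univ _, by rw [hfun, hfun, mul_assoc]⟩

theorem symm_commutesRightMul_of_eq_mul [Semigroup P] {e : PartialEquiv P P} {c : P}
    (hsrc : e.source = Set.univ) (hfun : ∀ x, e x = c * x) : e.symm.CommutesRightMul := by
  have hmem : ∀ x, x ∈ e.source := fun x => hsrc ▸ Set.mem_univ x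
  intro x hx y
  rw [symm_source, ← e.image_source_eq_target] at hx
  obtain ⟨a, ha, rfl⟩ := hx
  have hay : e a * y = e (a * y) := by rw [hfun, hfun, mul_assoc]
  rw [hay, symm_source, e.left_inv ha, e.left_inv (hmem _)]
  exact ⟨e.map_source (hmem _), rfl⟩

theorem CommutesRightMul.apply_eq_apply_one_mul [MulOneClass P] {e : PartialEquiv P P}
    (he : e.CommutesRightMul) (h1 : 1 ∈ e.source) (x : P) : e x = e 1 * x := by
  simpa using (he 1 h1 x).2

theorem CommutesRightMul.isUnit_apply_one [Monoid P] {e : PartialEquiv P P}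
    (he : e.CommutesRightMul) (he' : e.symm.CommutesRightMul) (hsrc : 1 ∈ e.source)
    (htgt : 1 ∈ e.target) : IsUnit (e 1) := by
  have hv : e.symm 1 ∈ e.source := e.map_target htgt
  have huv : e 1 * e.symm 1 = 1 := by
    rw [← he.apply_eq_apply_one_mul hsrc, e.right_inv htgt]
  have hvu : e.symm 1 * e 1 = 1 := by
    rw [← he'.apply_eq_apply_one_mul htgt, e.left_inv hsrc]
  exact isUnit_iff_exists.mpr ⟨e.symm 1, huv, hvu⟩

end PartialEquiv

open PartialEquiv in
theorem LeftInverseHull.commutesRightMul {P : Type*} [Monoid P] {e : PartialEquiv P P}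
    (h : LeftInverseHull P e) : e.CommutesRightMul ∧ e.symm.CommutesRightMul := by
  induction h with
  | base c e hsrc hfun =>
    exact ⟨commutesRightMul_of_eq_mul hsrc hfun, symm_commutesRightMul_of_eq_mul hsrc hfun⟩
  | symm e _ ih => exact ⟨ih.2, ih.1⟩
  | trans e f _ _ he hf =>
    exact ⟨he.1.trans hf.1, by rw [trans_symm_eq_symm_trans_symm]; exact hf.2.trans he.2⟩

theorem leftInverseHull_total_isUnit_general (P : Type*) [Monoid P]
    (s : PartialEquiv P P) (hs : LeftInverseHull P s)
    (hsrc : s.source = Set.univ) (htgt : s.target = Set.univ) :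
    IsUnit (s 1) ∧ ∀ x : P, s x = s 1 * x := by
  obtain ⟨hs, hsymm⟩ := hs.commutesRightMul
  have h1src : (1 : P) ∈ s.source := hsrc ▸ Set.mem_univ 1
  have h1tgt : (1 : P) ∈ s.target := htgt ▸ Set.mem_univ 1
  exact ⟨hs.isUnit_apply_one hsymm h1src h1tgt, hs.apply_eq_apply_one_mul h1src⟩

/-- **Globally defined zigzag maps are left multiplications by units.**  Let `P` be a
left cancellative monoid and let `ℐ` be its left inverse hull.  If `s ∈ ℐ` has domain
equal to all of `P` and range equal to all of `P`, then `u := s 1` is an invertible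
element (unit) of `P` and `s x = u * x` for every `x ∈ P`; that is, `s` is left
multiplication by a unit of `P`. -/
theorem leftInverseHull_total_isUnit (P : Type*) [Monoid P]
    (hP : ∀ c x y : P, c * x = c * y → x = y)
    (s : PartialEquiv P P) (hs : LeftInverseHull P s)
    (hsrc : s.source = Set.univ) (htgt : s.target = Set.univ) :
    IsUnit (s 1) ∧ ∀ x : P, s x = s 1 * x :=
  leftInverseHull_total_isUnit_general P s hs hsrc htgt
end
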